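/- arXiv:2605.10417 — 2 statements merged into one kernel-verified Lean document; each statement's English description precedes it below -/
import Mathlib

section
/- Define u(x,y,t) = exp(5t/4 − x + y/2 + 1/2) − 1 and R(y,t) = 5t/4 + y/2 + 1/2. Then for all x, all y ∈ [0,1], and all t ∈ [0,1]: (i) ∂u/∂t = ∂²u/∂x² + ∂²u/∂y²; (ii) u(x,y,0) = e^{−x + y/2 + 1/2} − 1, u(0,y,t) = e^{5t/4 + y/2 + 1/2} − 1, u(x,0,t) = e^{5t/4 − x + 1/2} − 1, and u(x,1,t) = e^{5t/4 − x + 1} − 1; (iii) R(y,0) = y/2 + 1/2 and u(R(y,t), y, t) = 0; and (iv) the Stefan condition ∂u/∂x(R(y,t),y,t) − ∂u/∂y(R(y,t),y,t)·∂R/∂y(y,t) + ∂R/∂t(y,t) = 0 holds. -/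
private lemma deriv_exp_aff (a b : ℝ) (f : ℝ → ℝ)
    (hf : ∀ s, f s = Real.exp (a * s + b) - 1) :
    deriv f = fun s => a * Real.exp (a * s + b) := by
  have hfe : f = fun s => Real.exp (a * s + b) - 1 := funext hf
  subst hfe
  funext s
  have h : HasDerivAt (fun s => Real.exp (a * s + b) - 1)
      (Real.exp (a * s + b) * a) s := by
    simpa using ((((hasDerivAt_id s).const_mul a).add_const b).exp).sub_const 1
  rw [h.deriv, mul_comm]

private lemma deriv_cexp_aff (a b c : ℝ) (f : ℝ → ℝ)
    (hf : ∀ s, f s = c * Real.exp (a * s + b)) :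
    deriv f = fun s => c * a * Real.exp (a * s + b) := by
  have hfe : f = fun s => c * Real.exp (a * s + b) := funext hf
  subst hfe
  funext s
  have h : HasDerivAt (fun s => c * Real.exp (a * s + b))
      (c * (Real.exp (a * s + b) * a)) s := by
    simpa using (((((hasDerivAt_id s).const_mul a).add_const b).exp)).const_mul c
  rw [h.deriv]; ring

private lemma deriv_aff (a b : ℝ) (f : ℝ → ℝ)
    (hf : ∀ s, f s = a * s + b) :
    deriv f = fun _ => a := by
  have hfe : f = fun s => a * s + b := funext hf
  subst hfe
  funext s
  have h : HasDerivAt (fun s => a * s + b) a s := by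
    simpa using (((hasDerivAt_id s).const_mul a).add_const b)
  exact h.deriv

/-- Exact solution of the two-dimensional one-phase Stefan problem (Example 5.3):
`u(x,y,t) = e^{5t/4 − x + y/2 + 1/2} − 1` and `R(y,t) = 5t/4 + y/2 + 1/2` satisfy
the two-dimensional heat equation, the initial and boundary conditions, the
interface conditions and the Stefan condition. -/
theorem two_dim_one_phase_stefan_exact_solution
    (u : ℝ → ℝ → ℝ → ℝ) (R : ℝ → ℝ → ℝ)
    (hu : u = fun x y t => Real.exp (5 * t / 4 - x + y / 2 + 1 / 2) - 1)
    (hR : R = fun y t => 5 * t / 4 + y / 2 + 1 / 2) :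
    ∀ x : ℝ, ∀ y ∈ Set.Icc (0 : ℝ) 1, ∀ t ∈ Set.Icc (0 : ℝ) 1,
      deriv (fun t' => u x y t') t =
        deriv (deriv (fun x' => u x' y t)) x + deriv (deriv (fun y' => u x y' t)) y ∧
      (u x y 0 = Real.exp (-x + y / 2 + 1 / 2) - 1 ∧
        u 0 y t = Real.exp (5 * t / 4 + y / 2 + 1 / 2) - 1 ∧
        u x 0 t = Real.exp (5 * t / 4 - x + 1 / 2) - 1 ∧
        u x 1 t = Real.exp (5 * t / 4 - x + 1) - 1) ∧
      (R y 0 = y / 2 + 1 / 2 ∧ u (R y t) y t = 0) ∧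
      deriv (fun x' => u x' y t) (R y t) -
          deriv (fun y' => u (R y t) y' t) y * deriv (fun y' => R y' t) y +
          deriv (fun t' => R y t') t = 0 := by
  subst hu hR
  intro x y _ t _
  have hdt : deriv (fun t' => Real.exp (5 * t' / 4 - x + y / 2 + 1 / 2) - 1) t
      = 5 / 4 * Real.exp (5 / 4 * t + (-x + y / 2 + 1 / 2)) := by
    rw [deriv_exp_aff (5 / 4) (-x + y / 2 + 1 / 2) _ (fun s => by
      rw [show 5 * s / 4 - x + y / 2 + 1 / 2 = 5 / 4 * s + (-x + y / 2 + 1 / 2) by ring])]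
  have hdx1 : deriv (fun x' => Real.exp (5 * t / 4 - x' + y / 2 + 1 / 2) - 1)
      = fun s => (-1 : ℝ) * Real.exp ((-1) * s + (5 * t / 4 + y / 2 + 1 / 2)) :=
    deriv_exp_aff (-1) (5 * t / 4 + y / 2 + 1 / 2) _ (fun s => by
      rw [show 5 * t / 4 - s + y / 2 + 1 / 2 = (-1) * s + (5 * t / 4 + y / 2 + 1 / 2) by ring])
  have hdx2 : deriv (deriv (fun x' => Real.exp (5 * t / 4 - x' + y / 2 + 1 / 2) - 1)) x
      = (-1 : ℝ) * (-1) * Real.exp ((-1) * x + (5 * t / 4 + y / 2 + 1 / 2)) := by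
    rw [hdx1, deriv_cexp_aff (-1) (5 * t / 4 + y / 2 + 1 / 2) (-1) _ (fun s => rfl)]
  have hdy1 : deriv (fun y' => Real.exp (5 * t / 4 - x + y' / 2 + 1 / 2) - 1)
      = fun s => (1 / 2 : ℝ) * Real.exp ((1 / 2) * s + (5 * t / 4 - x + 1 / 2)) :=
    deriv_exp_aff (1 / 2) (5 * t / 4 - x + 1 / 2) _ (fun s => by
      rw [show 5 * t / 4 - x + s / 2 + 1 / 2 = (1 / 2) * s + (5 * t / 4 - x + 1 / 2) by ring])
  have hdy2 : deriv (deriv (fun y' => Real.exp (5 * t / 4 - x + y' / 2 + 1 / 2) - 1)) y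
      = (1 / 2 : ℝ) * (1 / 2) * Real.exp ((1 / 2) * y + (5 * t / 4 - x + 1 / 2)) := by
    rw [hdy1, deriv_cexp_aff (1 / 2) (5 * t / 4 - x + 1 / 2) (1 / 2) _ (fun s => rfl)]
  refine ⟨?_, ⟨by norm_num, by norm_num, by norm_num, ?_⟩, ⟨by norm_num, ?_⟩, ?_⟩
  · rw [hdt, hdx2, hdy2]
    rw [show (-1 : ℝ) * x + (5 * t / 4 + y / 2 + 1 / 2) = 5 / 4 * t + (-x + y / 2 + 1 / 2) by ring,
      show (1 / 2 : ℝ) * y + (5 * t / 4 - x + 1 / 2) = 5 / 4 * t + (-x + y / 2 + 1 / 2) by ring]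
    ring
  · show Real.exp (5 * t / 4 - x + 1 / 2 + 1 / 2) - 1 = Real.exp (5 * t / 4 - x + 1) - 1
    rw [show 5 * t / 4 - x + 1 / 2 + 1 / 2 = 5 * t / 4 - x + 1 by ring]
  · show Real.exp (5 * t / 4 - (5 * t / 4 + y / 2 + 1 / 2) + y / 2 + 1 / 2) - 1 = 0
    rw [show 5 * t / 4 - (5 * t / 4 + y / 2 + 1 / 2) + y / 2 + 1 / 2 = 0 by ring,
      Real.exp_zero]
    ring
  · have hRt : deriv (fun t' => 5 * t' / 4 + y / 2 + 1 / 2) t = 5 / 4 := by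
      rw [deriv_aff (5 / 4) (y / 2 + 1 / 2) _ (fun s => by ring)]
    have hRy : deriv (fun y' => 5 * t / 4 + y' / 2 + 1 / 2) y = 1 / 2 := by
      rw [deriv_aff (1 / 2) (5 * t / 4 + 1 / 2) _ (fun s => by ring)]
    have hx : deriv (fun x' => Real.exp (5 * t / 4 - x' + y / 2 + 1 / 2) - 1)
        (5 * t / 4 + y / 2 + 1 / 2) = -1 := by
      rw [hdx1]
      show (-1 : ℝ) * Real.exp ((-1) * (5 * t / 4 + y / 2 + 1 / 2) + (5 * t / 4 + y / 2 + 1 / 2)) = -1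
      rw [show (-1 : ℝ) * (5 * t / 4 + y / 2 + 1 / 2) + (5 * t / 4 + y / 2 + 1 / 2) = 0 by ring,
        Real.exp_zero]
      ring
    have hy : deriv (fun y' =>
        Real.exp (5 * t / 4 - (5 * t / 4 + y / 2 + 1 / 2) + y' / 2 + 1 / 2) - 1) y
        = (1 / 2 : ℝ) * Real.exp ((1 / 2) * y + (-(y / 2))) := by
      rw [deriv_exp_aff (1 / 2) (-(y / 2)) _ (fun s => by
        rw [show 5 * t / 4 - (5 * t / 4 + y / 2 + 1 / 2) + s / 2 + 1 / 2
          = (1 / 2) * s + (-(y / 2)) by ring])]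
    rw [hx, hy, hRt, hRy,
      show (1 / 2 : ℝ) * y + (-(y / 2)) = 0 by ring, Real.exp_zero]
    ring
end

section
/- Define erfc(x) = (2/√π)·∫_x^∞ e^{−τ²} dτ, fix A, T∞ ∈ ℝ, and for r > 0, t > 0 define u(r,t) = A·[(1/s)·e^{−s²/4} − (√π/2)·erfc(s/2)] + T∞ with s = r/√t. Then u satisfies the three-dimensional radial heat equation ∂u/∂t(r,t) = ∂²u/∂r²(r,t) + (2/r)·∂u/∂r(r,t) for all r > 0, t > 0. -/
/-!
A self-similar function `u(r,t) = F(r/√t)` solves the radial heat equation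
`u_t = u_rr + (k/r) u_r` exactly when its profile satisfies the similarity ODE
`F'' = -(k/s + s/2) F'`. For the Frank-sphere profile the erfc term is chosen so that
`F'(s) = -A e^{-s²/4}/s²`, and `e^{-s²/4}/s^k` solves that first-order equation for `F'`;
here `k = 2`.
-/

open MeasureTheory Set Real Topology

theorem hasDerivAt_integral_Ioi {E : Type*} [NormedAddCommGroup E] [NormedSpace ℝ E]
    [CompleteSpace E] {f : ℝ → E} (hf : Integrable f) {x : ℝ} (hfx : ContinuousAt f x) :
    HasDerivAt (fun y => ∫ τ in Ioi y, f τ) (-f x) x := by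
  have hsplit : (fun y => ∫ τ in Ioi y, f τ) =
      fun y => (∫ τ in Ioi 0, f τ) - ∫ τ in (0 : ℝ)..y, f τ := by
    funext y
    rw [← intervalIntegral.integral_Ioi_sub_Ioi' hf.integrableOn hf.integrableOn, sub_sub_cancel]
  rw [hsplit]
  exact (intervalIntegral.integral_hasDerivAt_right hf.intervalIntegrable
    hf.aestronglyMeasurable.stronglyMeasurableAtFilter hfx).const_sub _

theorem hasDerivAt_exp_neg_sq_div_four (s : ℝ) :
    HasDerivAt (fun s => exp (-s ^ 2 / 4)) (exp (-s ^ 2 / 4) * (-s / 2)) s :=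
  (((hasDerivAt_pow 2 s).fun_neg).div_const 4).exp.congr_deriv (by ring)

theorem hasDerivAt_exp_neg_sq_div_four_div_pow (k : ℕ) {s : ℝ} (hs : s ≠ 0) :
    HasDerivAt (fun s => exp (-s ^ 2 / 4) / s ^ k)
      (-(k / s + s / 2) * (exp (-s ^ 2 / 4) / s ^ k)) s := by
  refine ((hasDerivAt_exp_neg_sq_div_four s).div (hasDerivAt_pow k s)
    (pow_ne_zero k hs)).congr_deriv ?_
  rcases k with _ | k
  · simp only [pow_zero, div_one, CharP.cast_eq_zero, zero_div, zero_add]; ring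
  · rw [Nat.add_sub_cancel, pow_succ]
    field_simp
    push_cast
    ring

theorem hasDerivAt_div_sqrt (r : ℝ) {t : ℝ} (ht : 0 < t) :
    HasDerivAt (fun t => r / √t) (-(r / √t) / (2 * t)) t := by
  refine ((hasDerivAt_const t r).div (hasDerivAt_sqrt ht.ne') (sqrt_pos.2 ht).ne').congr_deriv ?_
  rw [sq_sqrt ht.le]
  field_simp
  ring

noncomputable def frankSphereProfile (erfc : ℝ → ℝ) (A Tinf s : ℝ) : ℝ :=
  A * ((1 / s) * exp (-s ^ 2 / 4) - (√π / 2) * erfc (s / 2)) + Tinf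

theorem hasDerivAt_frankSphereProfile {erfc : ℝ → ℝ}
    (herfc : ∀ x, HasDerivAt erfc (-(2 / √π) * exp (-x ^ 2)) x) (A Tinf : ℝ) {s : ℝ}
    (hs : s ≠ 0) :
    HasDerivAt (frankSphereProfile erfc A Tinf) (-A * (exp (-s ^ 2 / 4) / s ^ 2)) s := by
  have hinv : HasDerivAt (fun s => 1 / s) (-(1 / s ^ 2)) s := by
    simpa only [one_div] using hasDerivAt_inv hs
  have herfc_half : HasDerivAt (fun s => erfc (s / 2)) (-(2 / √π) * exp (-(s / 2) ^ 2) / 2) s :=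
    ((herfc (s / 2)).comp s ((hasDerivAt_id s).div_const 2)).congr_deriv (by ring)
  have hexp := hasDerivAt_exp_neg_sq_div_four s
  refine ((((hinv.mul hexp).sub (herfc_half.const_mul (√π / 2))).const_mul A).add_const
    Tinf).congr_deriv ?_
  have hπ : √π ≠ 0 := (sqrt_pos.2 pi_pos).ne'
  rw [show -(s / 2) ^ 2 = -s ^ 2 / 4 by ring]
  field_simp
  ring

theorem hasDerivAt_comp_div_sqrt {F F' : ℝ → ℝ} (hF : ∀ s, 0 < s → HasDerivAt F (F' s) s)
    {r t : ℝ} (hr : 0 < r) (ht : 0 < t) :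
    HasDerivAt (fun r => F (r / √t)) (F' (r / √t) / √t) r :=
  ((hF _ (div_pos hr (sqrt_pos.2 ht))).comp r ((hasDerivAt_id r).div_const √t)).congr_deriv
    (mul_one_div _ _)

theorem radial_heat_of_similarity_ode {F F' : ℝ → ℝ} {k : ℝ}
    (hF : ∀ s, 0 < s → HasDerivAt F (F' s) s)
    (hF' : ∀ s, 0 < s → HasDerivAt F' (-(k / s + s / 2) * F' s) s)
    {r t : ℝ} (hr : 0 < r) (ht : 0 < t) :
    deriv (fun t => F (r / √t)) t =
      deriv (deriv fun r => F (r / √t)) r + k / r * deriv (fun r => F (r / √t)) r := by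
  have hs : 0 < r / √t := div_pos hr (sqrt_pos.2 ht)
  have hux : deriv (fun r => F (r / √t)) =ᶠ[𝓝 r] fun r => F' (r / √t) / √t := by
    filter_upwards [Ioi_mem_nhds hr] with x hx
    exact (hasDerivAt_comp_div_sqrt hF hx ht).deriv
  have hut : HasDerivAt (fun t => F (r / √t)) (F' (r / √t) * (-(r / √t) / (2 * t))) t :=
    (hF _ hs).comp t (hasDerivAt_div_sqrt r ht)
  rw [hut.deriv, hux.deriv_eq,
    ((hasDerivAt_comp_div_sqrt hF' hr ht).div_const √t).deriv,
    (hasDerivAt_comp_div_sqrt hF hr ht).deriv]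
  have hst : √t ≠ 0 := (sqrt_pos.2 ht).ne'
  field_simp
  rw [sq_sqrt ht.le]
  ring

/-- The three-dimensional Frank-sphere temperature field
`u(r,t) = A[(1/s)e^{−s²/4} − (√π/2)·erfc(s/2)] + T∞`, with `s = r/√t` and
`erfc(x) = (2/√π)∫_x^∞ e^{−τ²} dτ`, satisfies the three-dimensional radial heat
equation `u_t = u_rr + (2/r) u_r` for all `r > 0`, `t > 0`. -/
theorem frank_sphere_3d_solves_radial_heat
    (erfc : ℝ → ℝ)
    (herfc : erfc = fun x => (2 / Real.sqrt Real.pi) * ∫ τ in Set.Ioi x, Real.exp (-τ ^ 2))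
    (A Tinf : ℝ)
    (u : ℝ → ℝ → ℝ)
    (hu : u = fun r t =>
      A * ((1 / (r / Real.sqrt t)) * Real.exp (-(r / Real.sqrt t) ^ 2 / 4) -
        (Real.sqrt Real.pi / 2) * erfc ((r / Real.sqrt t) / 2)) + Tinf) :
    ∀ r : ℝ, 0 < r → ∀ t : ℝ, 0 < t →
      deriv (fun t' => u r t') t =
        deriv (deriv (fun r' => u r' t)) r + (2 / r) * deriv (fun r' => u r' t) r := by
  intro r hr t ht
  have hgauss : Integrable fun τ : ℝ => exp (-τ ^ 2) := by
    simpa using integrable_exp_neg_mul_sq one_pos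
  have herfc_deriv (x : ℝ) : HasDerivAt erfc (-(2 / √π) * exp (-x ^ 2)) x := by
    subst herfc
    exact ((hasDerivAt_integral_Ioi hgauss (by fun_prop)).const_mul _).congr_deriv (by ring)
  have hprofile_deriv (s : ℝ) (hs : 0 < s) : HasDerivAt (fun s => -A * (exp (-s ^ 2 / 4) / s ^ 2))
      (-(2 / s + s / 2) * (-A * (exp (-s ^ 2 / 4) / s ^ 2))) s :=
    ((hasDerivAt_exp_neg_sq_div_four_div_pow 2 hs.ne').const_mul (-A)).congr_deriv
      (by push_cast; ring)
  subst hu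
  exact radial_heat_of_similarity_ode (F := frankSphereProfile erfc A Tinf)
    (fun s hs => hasDerivAt_frankSphereProfile herfc_deriv A Tinf hs.ne') hprofile_deriv hr ht
end
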